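/- Define the Airy coefficients α : ℕ → ℝ by α(0) = 1, α(1) = 0, α(2) = -1/2, and α(k) = -(α(k-3) + α(k-2))/(k(k-1)) for all k ≥ 3. For k ∈ ℕ let m(k) = ⌊k/6⌋ and D(k) = ∏_{i=0}^{m(k)-1} (k - 6i - 1)(k - 6i - 2), with D(k) = 1 when m(k) = 0. Let a : ℕ → ℕ → ℝ satisfy: (i) a n k = α(k) for every n and every k ≤ 2n + 1; and (ii) |a n k| ≤ 2^{m(k)} / D(k) for all n and k. Then for each n the series f_n(r) = ∑_{k=0}^∞ (a n k)·r^k converges absolutely for every r ∈ ℝ, and for every R > 0 the sequence of functions f_n converges uniformly on [-R, R] to the function f(r) = ∑_{k=0}^∞ α(k)·r^k. -/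
import Mathlib

set_option maxHeartbeats 800000

/-- The majorant denominator of Lemma 4.4: `D k = ∏_{i=0}^{⌊k/6⌋-1} (k-6i-1)(k-6i-2)`,
an empty product (hence `1`) when `⌊k/6⌋ = 0`. -/
noncomputable def vimMajorantDenom (k : ℕ) : ℝ :=
  ∏ i ∈ Finset.range (k / 6), (((k : ℝ) - 6 * (i : ℝ) - 1) * ((k : ℝ) - 6 * (i : ℝ) - 2))

lemma vim_denom_pos (k : ℕ) : 0 < vimMajorantDenom k := by
  unfold vimMajorantDenom
  apply Finset.prod_pos
  intro i hi
  rw [Finset.mem_range] at hi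
  have h6 : k / 6 * 6 ≤ k := Nat.div_mul_le_self k 6
  have : (6 * i + 6 : ℕ) ≤ k := by omega
  have hc : (6 : ℝ) * i + 6 ≤ k := by exact_mod_cast this
  nlinarith

lemma vim_denom_ge_factorial (k : ℕ) : ((k / 6).factorial : ℝ) ≤ vimMajorantDenom k := by
  set m := k / 6 with hm
  have h6 : m * 6 ≤ k := Nat.div_mul_le_self k 6
  have hfacN : (∏ i ∈ Finset.range m, (m - i)) = m.factorial := by
    have h1 := Finset.prod_range_reflect (fun i => i + 1) m
    have h2 : (∏ j ∈ Finset.range m, (m - 1 - j + 1)) = ∏ j ∈ Finset.range m, (m - j) := by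
      apply Finset.prod_congr rfl
      intro j hj
      rw [Finset.mem_range] at hj
      omega
    rw [h2] at h1
    rw [h1, Finset.prod_range_add_one_eq_factorial]
  have hfac : (∏ i ∈ Finset.range m, ((m - i : ℕ) : ℝ)) = (m.factorial : ℝ) := by
    rw [← Nat.cast_prod, hfacN]
  rw [← hfac]
  unfold vimMajorantDenom
  rw [← hm]
  apply Finset.prod_le_prod
  · intro i _; positivity
  · intro i hi
    rw [Finset.mem_range] at hi
    have hcast : ((m - i : ℕ) : ℝ) = (m : ℝ) - i := by
      rw [Nat.cast_sub hi.le]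
    rw [hcast]
    have h1 : (6 : ℝ) * m ≤ k := by exact_mod_cast by omega
    have h2 : (i : ℝ) + 1 ≤ m := by exact_mod_cast hi
    nlinarith [sq_nonneg ((m : ℝ) - i), sq_nonneg ((k : ℝ) - 6 * i - 3)]

lemma vim_majorant_summable (ρ : ℝ) (hρ : 0 ≤ ρ) :
    Summable (fun k : ℕ => 2 ^ (k / 6) / vimMajorantDenom k * ρ ^ k) := by
  set M := max 1 ρ with hMdef
  have hM1 : (1 : ℝ) ≤ M := le_max_left _ _
  have hM0 : (0 : ℝ) < M := lt_of_lt_of_le one_pos hM1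
  set g : ℕ → ℝ := fun m => M ^ 5 * ((2 * M ^ 6) ^ m / m.factorial) with hg
  have hgsum : Summable g := (Real.summable_pow_div_factorial (2 * M ^ 6)).mul_left _
  have hgnn : ∀ m, 0 ≤ g m := by
    intro m
    have : (0:ℝ) < m.factorial := by exact_mod_cast m.factorial_pos
    positivity
  have hcnn : ∀ k, 0 ≤ 2 ^ (k / 6) / vimMajorantDenom k * ρ ^ k := by
    intro k; have := vim_denom_pos k; positivity
  have hle : ∀ k : ℕ, 2 ^ (k / 6) / vimMajorantDenom k * ρ ^ k ≤ g (k / 6) := by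
    intro k
    set m := k / 6 with hm
    have hk1 : k ≤ 6 * m + 5 := by omega
    have hρM : ρ ≤ M := le_max_right _ _
    have h1 : ρ ^ k ≤ M ^ k := pow_le_pow_left₀ hρ hρM k
    have h2 : M ^ k ≤ M ^ (6 * m + 5) := pow_le_pow_right₀ hM1 hk1
    have hD := vim_denom_ge_factorial k
    rw [← hm] at hD
    have hDpos := vim_denom_pos k
    have hfpos : (0 : ℝ) < (m.factorial : ℝ) := by exact_mod_cast m.factorial_pos
    have step1 : 2 ^ m / vimMajorantDenom k * ρ ^ k ≤ 2 ^ m / (m.factorial : ℝ) * M ^ (6 * m + 5) := by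
      apply mul_le_mul
      · apply div_le_div_of_nonneg_left (by positivity) hfpos hD
      · exact h1.trans h2
      · positivity
      · positivity
    refine step1.trans (le_of_eq ?_)
    have hpow : (2 * M ^ 6) ^ m = 2 ^ m * M ^ (6 * m) := by
      rw [mul_pow, ← pow_mul]
    rw [hg]
    simp only []
    rw [hpow]
    field_simp
    ring
  apply summable_of_sum_range_le hcnn (c := 6 * ∑' m, g m)
  intro N
  have key : (∑ k ∈ Finset.range (6 * N), g (k / 6)) = ∑ m ∈ Finset.range N, 6 * g m := by
    induction N with
    | zero => simp
    | succ N ih =>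
      have hthis : ∀ j ∈ Finset.range 6, g ((6 * N + j) / 6) = g N := by
        intro j hj
        rw [Finset.mem_range] at hj
        congr 1
        omega
      have h1 : (∑ x ∈ Finset.range 6, g ((6 * N + x) / 6)) = 6 * g N := by
        rw [Finset.sum_congr rfl hthis, Finset.sum_const, Finset.card_range,
          nsmul_eq_mul]
        norm_num
      rw [show 6 * (N + 1) = 6 * N + 6 by ring, Finset.sum_range_add, ih, h1,
        Finset.sum_range_succ]
  calc (∑ k ∈ Finset.range N, 2 ^ (k / 6) / vimMajorantDenom k * ρ ^ k)
      ≤ ∑ k ∈ Finset.range N, g (k / 6) := Finset.sum_le_sum fun k _ => hle k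
    _ ≤ ∑ k ∈ Finset.range (6 * N), g (k / 6) := by
        apply Finset.sum_le_sum_of_subset_of_nonneg
        · exact Finset.range_subset_range.mpr (by omega)
        · intro k _ _; exact hgnn _
    _ = ∑ m ∈ Finset.range N, 6 * g m := key
    _ = 6 * ∑ m ∈ Finset.range N, g m := by rw [Finset.mul_sum]
    _ ≤ 6 * ∑' m, g m := by
        have := Summable.sum_le_tsum (Finset.range N) (fun i _ => hgnn i) hgsum
        linarith

/-- Theorem 4.5: if the VIM coefficients agree with the Airy
coefficients up to index `2n + 1` and obey the Lemma 4.4 bound, then each iterate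
series converges absolutely everywhere and the iterates converge uniformly on every
`[-R, R]` to the Airy series. -/
theorem vim_iterates_converge_uniformly
    (α : ℕ → ℝ) (hα0 : α 0 = 1) (hα1 : α 1 = 0) (hα2 : α 2 = -1/2)
    (hαrec : ∀ k : ℕ, 3 ≤ k → α k = -(α (k - 3) + α (k - 2)) / ((k : ℝ) * ((k : ℝ) - 1)))
    (a : ℕ → ℕ → ℝ)
    (hairy : ∀ n : ℕ, ∀ k ≤ 2 * n + 1, a n k = α k)
    (hbound : ∀ n k : ℕ, |a n k| ≤ 2 ^ (k / 6) / vimMajorantDenom k) :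
    (∀ n : ℕ, ∀ r : ℝ, Summable (fun k : ℕ => |a n k * r ^ k|)) ∧
    (∀ R : ℝ, 0 < R →
      TendstoUniformlyOn (fun n : ℕ => fun r : ℝ => ∑' k : ℕ, a n k * r ^ k)
        (fun r : ℝ => ∑' k : ℕ, α k * r ^ k) Filter.atTop (Set.Icc (-R) R)) := by
  have hαb : ∀ k, |α k| ≤ 2 ^ (k / 6) / vimMajorantDenom k := by
    intro k
    rw [← hairy k k (by omega)]
    exact hbound k k
  have habs : ∀ (b : ℕ → ℝ), (∀ k, |b k| ≤ 2 ^ (k / 6) / vimMajorantDenom k) →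
      ∀ r : ℝ, Summable (fun k : ℕ => |b k * r ^ k|) := by
    intro b hb r
    have hs := vim_majorant_summable |r| (abs_nonneg r)
    apply Summable.of_nonneg_of_le (fun k => abs_nonneg _) _ hs
    intro k
    rw [abs_mul, abs_pow]
    exact mul_le_mul_of_nonneg_right (hb k) (by positivity)
  refine ⟨fun n r => habs (a n) (hbound n) r, ?_⟩
  intro R hR
  rw [Metric.tendstoUniformlyOn_iff]
  intro ε hε
  set c : ℕ → ℝ := fun k => 2 * (2 ^ (k / 6) / vimMajorantDenom k * R ^ k) with hc
  have hcsum : Summable c := (vim_majorant_summable R hR.le).mul_left 2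
  have hcnn : ∀ k, 0 ≤ c k := by
    intro k; have := vim_denom_pos k
    simp only [hc]; positivity
  have h2n : Filter.Tendsto (fun n : ℕ => 2 * n + 2) Filter.atTop Filter.atTop := by
    apply Filter.tendsto_atTop_atTop.mpr
    intro b
    exact ⟨b, fun n hn => by omega⟩
  have htail : Filter.Tendsto (fun n : ℕ => ∑' k, c (k + (2 * n + 2)))
      Filter.atTop (nhds 0) := (tendsto_sum_nat_add c).comp h2n
  have hev := htail.eventually (gt_mem_nhds hε)
  filter_upwards [hev] with n hn r hr
  rw [Set.mem_Icc] at hr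
  have hrR : |r| ≤ R := abs_le.mpr hr
  have Sa : Summable (fun k => a n k * r ^ k) := (habs (a n) (hbound n) r).of_abs
  have Sα : Summable (fun k => α k * r ^ k) := (habs α hαb r).of_abs
  set h : ℕ → ℝ := fun k => α k * r ^ k - a n k * r ^ k with hh
  have hhb : ∀ k, |h k| ≤ c k := by
    intro k
    have e1 : |h k| = |α k - a n k| * |r| ^ k := by
      rw [hh]
      simp only []
      rw [show α k * r ^ k - a n k * r ^ k = (α k - a n k) * r ^ k by ring, abs_mul, abs_pow]
    rw [e1]
    have h1 : |α k - a n k| ≤ 2 * (2 ^ (k / 6) / vimMajorantDenom k) := by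
      have := abs_sub (α k) (a n k)
      have hb1 := hαb k
      have hb2 := hbound n k
      calc |α k - a n k| ≤ |α k| + |a n k| := by
            rw [sub_eq_add_neg]
            exact (abs_add_le _ _).trans (by rw [abs_neg])
        _ ≤ 2 * (2 ^ (k / 6) / vimMajorantDenom k) := by linarith
    have h2 : |r| ^ k ≤ R ^ k := pow_le_pow_left₀ (abs_nonneg r) hrR k
    have hCnn : (0:ℝ) ≤ 2 * (2 ^ (k / 6) / vimMajorantDenom k) := by
      have := vim_denom_pos k; positivity
    calc |α k - a n k| * |r| ^ k
        ≤ 2 * (2 ^ (k / 6) / vimMajorantDenom k) * R ^ k :=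
          mul_le_mul h1 h2 (by positivity) hCnn
      _ = c k := by rw [hc]; ring
  have Sh : Summable (fun k => |h k|) :=
    Summable.of_nonneg_of_le (fun _ => abs_nonneg _) hhb hcsum
  rw [Real.dist_eq]
  have hsub : (∑' k, α k * r ^ k) - (∑' k, a n k * r ^ k) = ∑' k, h k :=
    (Summable.tsum_sub Sα Sa).symm
  calc |(∑' k, α k * r ^ k) - (∑' k, a n k * r ^ k)|
      = |∑' k, h k| := by rw [hsub]
    _ ≤ ∑' k, |h k| := by
        have := norm_tsum_le_tsum_norm (f := h) (by simpa [Real.norm_eq_abs] using Sh)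
        simpa [Real.norm_eq_abs] using this
    _ = (∑ i ∈ Finset.range (2 * n + 2), |h i|) + ∑' k, |h (k + (2 * n + 2))| :=
        (Summable.sum_add_tsum_nat_add _ Sh).symm
    _ = ∑' k, |h (k + (2 * n + 2))| := by
        rw [Finset.sum_eq_zero, zero_add]
        intro i hi
        rw [Finset.mem_range] at hi
        have : a n i = α i := hairy n i (by omega)
        rw [hh]
        simp [this]
    _ ≤ ∑' k, c (k + (2 * n + 2)) := by
        apply Summable.tsum_le_tsum (fun k => hhb _)
        · exact (summable_nat_add_iff (f := fun k => |h k|) (2 * n + 2)).mpr Sh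
        · exact (summable_nat_add_iff (f := c) (2 * n + 2)).mpr hcsum
    _ < ε := hn
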